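/- Let d ≥ 2, β ≥ 1 and Δ ≥ 1 be constants. Any intersection graph G of similarly sized β-fat objects in ℝ^d with maximum degree at most Δ has growth O(r^d): there is a constant c (depending only on d, β, Δ) such that for every vertex v and every integer r ≥ 1, the number of vertices at graph distance less than r from v is at most c·r^d. -/
import Mathlib

open MeasureTheory Metric
open scoped ENNReal Classical

/-- If sets `A i ⊆ B` for `i ∈ T` and every point lies in at most `k` of them, then the
sum of their measures is at most `k * μ B`. -/
private lemma sum_measure_le_mul {α : Type*} [MeasurableSpace α] (μ : Measure α)
    {ι : Type*} (T : Finset ι) (A : ι → Set α) (B : Set α) (k : ℕ)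
    (hmeas : ∀ i ∈ T, MeasurableSet (A i))
    (hB : MeasurableSet B)
    (hsub : ∀ i ∈ T, A i ⊆ B)
    (hmult : ∀ a : α, ({i ∈ T | a ∈ A i} : Finset ι).card ≤ k) :
    ∑ i ∈ T, μ (A i) ≤ k * μ B := by
  classical
  have h1 := lintegral_finset_sum (μ := μ) T
    (f := fun i a => (A i).indicator (fun _ => (1 : ℝ≥0∞)) a)
    (fun i hi => (measurable_one.indicator (hmeas i hi)))
  have h1' : ∑ i ∈ T, μ (A i)
      = ∫⁻ a, ∑ i ∈ T, (A i).indicator (fun _ => (1 : ℝ≥0∞)) a ∂μ := by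
    rw [h1]
    refine (Finset.sum_congr rfl fun i hi => ?_).symm
    rw [lintegral_indicator (hmeas i hi)]
    simp
  rw [h1']
  have h2 : ∀ a, ∑ i ∈ T, (A i).indicator (fun _ => (1 : ℝ≥0∞)) a
      ≤ B.indicator (fun _ => (k : ℝ≥0∞)) a := by
    intro a
    have hsum : ∑ i ∈ T, (A i).indicator (fun _ => (1 : ℝ≥0∞)) a
        = (({i ∈ T | a ∈ A i} : Finset ι).card : ℝ≥0∞) := by
      rw [← Finset.sum_boole]
      refine Finset.sum_congr rfl fun i _ => ?_
      by_cases h : a ∈ A i <;> simp [Set.indicator, h]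
    rw [hsum]
    by_cases haB : a ∈ B
    · simp only [Set.indicator_of_mem haB]
      exact_mod_cast Nat.cast_le.mpr (hmult a)
    · have : ({i ∈ T | a ∈ A i} : Finset ι) = ∅ := by
        refine Finset.eq_empty_of_forall_notMem fun i hi => ?_
        simp only [Finset.mem_filter] at hi
        exact haB (hsub i hi.1 hi.2)
      simp [this, Set.indicator_of_notMem haB]
  calc ∫⁻ a, ∑ i ∈ T, (A i).indicator (fun _ => (1 : ℝ≥0∞)) a ∂μ
      ≤ ∫⁻ a, B.indicator (fun _ => (k : ℝ≥0∞)) a ∂μ := lintegral_mono h2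
    _ = k * μ B := by rw [lintegral_indicator hB]; simp [mul_comm]

/-- For constants `d ≥ 2`, `β ≥ 1`, `Δ ≥ 1`, there is a constant
`c > 0` (depending only on `d, β, Δ`) such that for every intersection graph `G`
of similarly sized `β`-fat objects in `ℝ^d` with maximum degree at most `Δ`,
every vertex `v` and every integer `r ≥ 1`, the ball
`B_G(v, r) = {w : dist_G(v, w) < r}` contains at most `c r^d` vertices. -/
theorem stmt14 (d : ℕ) (β : ℝ) (Δ : ℕ) (hd : 2 ≤ d) (hβ : 1 ≤ β) (hΔ : 1 ≤ Δ) :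
    ∃ c : ℝ, 0 < c ∧
      ∀ (n : ℕ) (O : Fin n → Set (EuclideanSpace ℝ (Fin d))),
        (∀ v, ∃ x y : EuclideanSpace ℝ (Fin d),
          Metric.closedBall x 1 ⊆ O v ∧ O v ⊆ Metric.closedBall y β) →
        ∀ (G : SimpleGraph (Fin n)),
          (∀ u v, G.Adj u v ↔ u ≠ v ∧ (O u ∩ O v).Nonempty) →
          (∀ v, (G.neighborSet v).ncard ≤ Δ) →
          ∀ (v : Fin n) (r : ℕ), 1 ≤ r →
            ({w | G.Reachable v w ∧ G.dist v w < r}.ncard : ℝ) ≤ c * (r : ℝ) ^ d := by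
  classical
  have hβ0 : (0:ℝ) < β := lt_of_lt_of_le one_pos hβ
  refine ⟨((Δ:ℝ) + 1) * (4*β+1)^d, by positivity, ?_⟩
  intro n O hO G hG hdeg v r hr
  choose x y hx hy using hO
  -- the inner-ball center is within β of the outer-ball center
  have hxy : ∀ w, dist (x w) (y w) ≤ β := fun w => by
    have := hy w (hx w (Metric.mem_closedBall_self zero_le_one))
    simpa [Metric.mem_closedBall] using this
  -- adjacent vertices have centers within 4β
  have hadj : ∀ u w, G.Adj u w → dist (x u) (x w) ≤ 4*β := by
    intro u w h
    obtain ⟨p, hpu, hpw⟩ := ((hG u w).1 h).2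
    have h1 : dist (x u) (y u) ≤ β := hxy u
    have h2 : dist (y u) p ≤ β := by
      have := hy u hpu; rw [dist_comm]; simpa [Metric.mem_closedBall] using this
    have h3 : dist p (y w) ≤ β := by
      have := hy w hpw; simpa [Metric.mem_closedBall] using this
    have h4 : dist (y w) (x w) ≤ β := by rw [dist_comm]; exact hxy w
    have ht : dist (x u) (x w) ≤ dist (x u) (y u) + dist (y u) p + dist p (y w)
        + dist (y w) (x w) := by
      calc dist (x u) (x w) ≤ dist (x u) (p) + dist p (y w) + dist (y w) (x w) :=
            dist_triangle4 _ _ _ _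
        _ ≤ dist (x u) (y u) + dist (y u) p + dist p (y w) + dist (y w) (x w) := by
            have := dist_triangle (x u) (y u) p; linarith
    linarith
  -- centers along a walk
  have hwalk : ∀ (u w : Fin n) (p : G.Walk u w), dist (x u) (x w) ≤ 4*β * p.length := by
    intro u w p
    induction p with
    | nil => simp
    | @cons a b c h q ih =>
        have : dist (x a) (x c) ≤ dist (x a) (x b) + dist (x b) (x c) := dist_triangle _ _ _
        have hab := hadj a b h
        simp only [SimpleGraph.Walk.length_cons, Nat.cast_add, Nat.cast_one]
        have hβ4 : (0:ℝ) ≤ 4*β := by positivity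
        nlinarith [ih]
  set S := {w | G.Reachable v w ∧ G.dist v w < r} with hS
  have hSfin : S.Finite := Set.toFinite _
  set T := hSfin.toFinset with hT
  -- distance bound for centers of vertices in T
  have hdist : ∀ w ∈ T, dist (x v) (x w) ≤ 4*β*((r:ℝ)-1) := by
    intro w hw
    rw [hT, Set.Finite.mem_toFinset] at hw
    obtain ⟨hreach, hlt⟩ := hw
    obtain ⟨p, hp⟩ := hreach.exists_walk_length_eq_dist
    have := hwalk v w p
    rw [hp] at this
    have hle : (G.dist v w : ℝ) ≤ (r:ℝ) - 1 := by
      have h0 : G.dist v w ≤ r - 1 := Nat.le_sub_one_of_lt hlt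
      have h2 : ((G.dist v w : ℕ) : ℝ) ≤ ((r - 1 : ℕ) : ℝ) := Nat.cast_le.mpr h0
      have h3 : ((r - 1 : ℕ) : ℝ) = (r:ℝ) - 1 := by
        rw [Nat.cast_sub hr]; simp
      linarith
    have hβ4 : (0:ℝ) ≤ 4*β := by positivity
    nlinarith
  -- the big ball
  set R : ℝ := (4*β+1) * r with hR
  have hR0 : 0 ≤ R := by positivity
  have hsub : ∀ w ∈ T, closedBall (x w) 1 ⊆ closedBall (x v) R := by
    intro w hw p hp
    simp only [mem_closedBall] at hp ⊢
    have h1 := hdist w hw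
    have h2 : dist p (x v) ≤ dist p (x w) + dist (x w) (x v) := dist_triangle _ _ _
    have h3 : dist (x w) (x v) = dist (x v) (x w) := dist_comm _ _
    have hr1 : (1:ℝ) ≤ r := by exact_mod_cast hr
    have h4 : 4*β*((r:ℝ)-1) + 1 ≤ R := by rw [hR]; nlinarith
    linarith
  -- multiplicity bound
  have hmult : ∀ a : EuclideanSpace ℝ (Fin d),
      ({w ∈ T | a ∈ closedBall (x w) 1} : Finset (Fin n)).card ≤ Δ + 1 := by
    intro a
    set F := ({w ∈ T | a ∈ closedBall (x w) 1} : Finset (Fin n)) with hF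
    rcases Finset.eq_empty_or_nonempty F with he | ⟨w0, hw0⟩
    · simp [he]
    · have hmem : ∀ w ∈ F, w = w0 ∨ G.Adj w0 w := by
        intro w hw
        by_cases hww : w = w0
        · exact Or.inl hww
        · refine Or.inr ((hG w0 w).2 ⟨fun h => hww h.symm, ?_⟩)
          have ha0 : a ∈ O w0 := hx w0 (Finset.mem_filter.mp hw0).2
          have haw : a ∈ O w := hx w (Finset.mem_filter.mp hw).2
          exact ⟨a, ha0, haw⟩
      have hfin : (G.neighborSet w0).Finite := Set.toFinite _
      have hsubF : F ⊆ insert w0 hfin.toFinset := by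
        intro w hw
        rcases hmem w hw with h | h
        · simp [h]
        · simp [Set.Finite.mem_toFinset, SimpleGraph.mem_neighborSet, h]
      calc F.card ≤ (insert w0 hfin.toFinset).card := Finset.card_le_card hsubF
        _ ≤ hfin.toFinset.card + 1 := Finset.card_insert_le _ _
        _ ≤ Δ + 1 := by
            have := hdeg w0
            rw [Set.ncard_eq_toFinset_card _ hfin] at this
            omega
  -- measure argument
  have hkey : ∑ w ∈ T, volume (closedBall (x w) 1)
      ≤ (Δ + 1 : ℕ) * volume (closedBall (x v) R) := by
    have := sum_measure_le_mul volume T (fun w => closedBall (x w) 1)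
      (closedBall (x v) R) (Δ + 1)
      (fun w _ => measurableSet_closedBall) measurableSet_closedBall hsub hmult
    simpa using this
  have hrankd : Module.finrank ℝ (EuclideanSpace ℝ (Fin d)) = d := by simp
  have hone : ∀ z : EuclideanSpace ℝ (Fin d),
      volume (closedBall z 1) = volume (ball (0 : EuclideanSpace ℝ (Fin d)) 1) := by
    intro z
    rw [Measure.addHaar_closedBall volume z zero_le_one]
    simp
  have hbig : volume (closedBall (x v) R)
      = ENNReal.ofReal (R ^ d) * volume (ball (0 : EuclideanSpace ℝ (Fin d)) 1) := by
    rw [Measure.addHaar_closedBall volume (x v) hR0, hrankd]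
  have hsum : ∑ w ∈ T, volume (closedBall (x w) 1)
      = (T.card : ℝ≥0∞) * volume (ball (0 : EuclideanSpace ℝ (Fin d)) 1) := by
    rw [Finset.sum_congr rfl (fun w _ => hone (x w))]
    simp [Finset.sum_const, nsmul_eq_mul]
  rw [hsum, hbig, ← mul_assoc] at hkey
  have hpos : volume (ball (0 : EuclideanSpace ℝ (Fin d)) 1) ≠ 0 :=
    (measure_ball_pos volume _ one_pos).ne'
  have hfin2 : volume (ball (0 : EuclideanSpace ℝ (Fin d)) 1) ≠ ⊤ :=
    measure_ball_lt_top.ne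
  have hcard : (T.card : ℝ≥0∞) ≤ (Δ + 1 : ℕ) * ENNReal.ofReal (R ^ d) :=
    (ENNReal.mul_le_mul_iff_left hpos hfin2).mp hkey
  -- convert to reals
  have hRd : (0:ℝ) ≤ R ^ d := by positivity
  have hcardR : (T.card : ℝ) ≤ ((Δ:ℝ) + 1) * R ^ d := by
    have h1 : ((Δ + 1 : ℕ) : ℝ≥0∞) * ENNReal.ofReal (R ^ d)
        = ENNReal.ofReal (((Δ:ℝ) + 1) * R ^ d) := by
      rw [ENNReal.ofReal_mul (by positivity)]
      congr 1
      rw [← ENNReal.ofReal_natCast]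
      push_cast
      ring_nf
    rw [h1, ← ENNReal.ofReal_natCast] at hcard
    exact (ENNReal.ofReal_le_ofReal_iff (by positivity)).mp hcard
  have hncard : S.ncard = T.card := Set.ncard_eq_toFinset_card _ hSfin
  rw [hS] at hncard ⊢
  rw [hncard]
  calc (T.card : ℝ) ≤ ((Δ:ℝ) + 1) * R ^ d := hcardR
    _ = ((Δ:ℝ) + 1) * (4*β+1)^d * (r:ℝ)^d := by rw [hR, mul_pow]; ring
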